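/- Let f : ℝ → ℝ belong to S_{μ,L}(ℝ) with minimizer x⋆, and let X solve the ODE Ẍ + (3/t)Ẋ + f′(X) = 0 with X(0) = x₀ ≠ x⋆, Ẋ(0) = 0. Then: (i) there exists a root t ∈ (0, 7.6635/√μ) of X(t) − x⋆; (ii) for every t > 0 with X(t) = x⋆ there exists t′ ∈ (t, t + 7.6635/√μ) with X(t′) = x⋆; and (iii) whenever 0 < a < b < c satisfy X(a) = X(b) = X(c) = x⋆, one has c − a > π/√L. -/

import Mathlib

open Set Filter Topology

noncomputable section

/-- The class `S_{μ,L}(ℝ)` in dimension one: convex, continuously differentiable `f` with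
`L`-Lipschitz derivative such that `f(x) - μx²/2` is convex. -/
def MemS1 (μ L : ℝ) (f : ℝ → ℝ) : Prop :=
  ConvexOn ℝ Set.univ f ∧ ContDiff ℝ 1 f ∧
    (∀ x y : ℝ, |deriv f x - deriv f y| ≤ L * |x - y|) ∧
    ConvexOn ℝ Set.univ (fun x => f x - μ / 2 * x ^ 2)

/-- One-dimensional Nesterov ODE solution: `Ẍ + (3/t)Ẋ + f'(X) = 0`, `X(0) = x₀`,
`Ẋ(0) = 0`, C² on `(0,∞)` and C¹ on `[0,∞)`. -/
def NesterovSol1 (f : ℝ → ℝ) (x0 : ℝ) (X : ℝ → ℝ) : Prop :=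
  X 0 = x0 ∧
  ContDiffOn ℝ 1 X (Set.Ici 0) ∧
  ContDiffOn ℝ 2 X (Set.Ioi 0) ∧
  derivWithin X (Set.Ici 0) 0 = 0 ∧
  ∀ t > (0:ℝ), deriv (deriv X) t + (3 / t) * deriv X t + deriv f (X t) = 0

/-!
Write `Y = ±(X - x⋆)` with the sign making `Y` positive on a given arc. The equation becomes
`(t³ Y')' = -t³ g` with `g = ±f'(X)`, and strong convexity and the Lipschitz bound give
`μ Y ≤ g ≤ L Y` wherever `Y > 0`. For any explicit `w` with `(t³ w')' = -t³ κ w`, the weighted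
Wronskian `V = t³ (Y' w - Y w')` has `V' = t³ w (κ Y - g)`.

Taking `κ = μ - 5 / (4 t²)` and `w` built from a Riccati–Bessel function of order one, whose
consecutive zeros in the variable `√μ t` are less than `3π/2 < 7.6635` apart, a positive arc of `Y`
starting at a root (or at `t = 0`, where `Ẋ(0) = 0`) and outlasting the next zero of `w` would make
`V` nonincreasing from `0` there and yet positive at that zero. Taking `κ = L + 3 / (4 t²)` and
`w = t^(-3/2) sin (√L (t - p))`, two roots `p < q` of `Y` less than `π/√L` apart make `V` increase
strictly from `V p = 0` to `V q = q³ Y'(q) w(q) ≤ 0`. Three roots `a < b < c` enclose such a pair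
unless `X ≡ x⋆` on `(a, c)`, which backward uniqueness for the ODE excludes because `X 0 ≠ x⋆`.
-/

open Real

theorem mul_sq_le_deriv_sub_mul {f : ℝ → ℝ} {μ : ℝ} (hf : Differentiable ℝ f)
    (hconv : ConvexOn ℝ univ fun x => f x - μ / 2 * x ^ 2) (x y : ℝ) :
    μ * (y - x) ^ 2 ≤ (deriv f y - deriv f x) * (y - x) := by
  have hd : ∀ z, HasDerivAt (fun x => f x - μ / 2 * x ^ 2) (deriv f z - μ * z) z := fun z =>
    ((hf z).hasDerivAt.sub ((hasDerivAt_pow 2 z).const_mul _)).congr_deriv (by ring)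
  have hmono := hconv.monotoneOn_deriv fun z _ => (hd z).differentiableAt
  have key : ∀ a b, a ≤ b → μ * (b - a) ≤ deriv f b - deriv f a := fun a b hab => by
    have := hmono (mem_univ a) (mem_univ b) hab
    rw [(hd a).deriv, (hd b).deriv] at this
    linarith
  rcases le_total x y with h | h
  · nlinarith [key x y h]
  · nlinarith [key y x h]

theorem sub_mul_sub_le_mul_sq_of_abs_sub_le {a b u v L : ℝ} (h : |a - b| ≤ L * |u - v|) :
    (a - b) * (u - v) ≤ L * (u - v) ^ 2 :=
  calc (a - b) * (u - v) ≤ |a - b| * |u - v| := (le_abs_self _).trans_eq (abs_mul _ _)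
    _ ≤ L * |u - v| * |u - v| := mul_le_mul_of_nonneg_right h (abs_nonneg _)
    _ = L * (u - v) ^ 2 := by rw [mul_assoc, abs_mul_abs_self, sq]

theorem IsPreconnected.exists_sq_eq_one_forall_mul_pos {α : Type*} [TopologicalSpace α]
    {S : Set α} {F : α → ℝ} (hS : IsPreconnected S) (hF : ContinuousOn F S)
    (hne : ∀ x ∈ S, F x ≠ 0) : ∃ ε : ℝ, ε ^ 2 = 1 ∧ ∀ x ∈ S, 0 < ε * F x := by
  rcases hS.eq_or_eq_neg_of_sq_eq hF.abs hF (fun x _ => sq_abs (F x)) (hne _) with h | h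
  · exact ⟨1, one_pow 2, fun x hx => by rw [one_mul, ← h hx]; exact abs_pos.mpr (hne x hx)⟩
  · refine ⟨-1, by norm_num, fun x hx => ?_⟩
    have habs : |F x| = -F x := h hx
    rw [neg_one_mul, ← habs]
    exact abs_pos.mpr (hne x hx)

theorem exists_consecutive_eq {X : ℝ → ℝ} {a c s y : ℝ} (hX : ContinuousOn X (Icc a c))
    (ha : X a = y) (hc : X c = y) (hs : s ∈ Ioo a c) (hXs : X s ≠ y) :
    ∃ p q, a ≤ p ∧ p < q ∧ q ≤ c ∧ X p = y ∧ X q = y ∧ ∀ t ∈ Ioo p q, X t ≠ y := by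
  have hroots : ∀ {u v}, Icc u v ⊆ Icc a c → IsCompact (Icc u v ∩ X ⁻¹' {y}) := fun h =>
    isCompact_Icc.of_isClosed_subset
      ((hX.mono h).preimage_isClosed_of_isClosed isClosed_Icc isClosed_singleton)
      inter_subset_left
  obtain ⟨p, ⟨⟨hap, hps⟩, hXp⟩, hpmax⟩ := (hroots (Icc_subset_Icc_right hs.2.le)).exists_isGreatest
    ⟨a, ⟨left_mem_Icc.mpr hs.1.le, ha⟩⟩
  obtain ⟨q, ⟨⟨hsq, hqc⟩, hXq⟩, hqmin⟩ := (hroots (Icc_subset_Icc_left hs.1.le)).exists_isLeast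
    ⟨c, ⟨right_mem_Icc.mpr hs.2.le, hc⟩⟩
  have hps' : p < s := hps.lt_of_ne fun h => hXs (h ▸ hXp)
  have hsq' : s < q := hsq.lt_of_ne fun h => hXs (h ▸ hXq)
  refine ⟨p, q, hap, hps'.trans hsq', hqc, hXp, hXq, fun t ht hXt => ?_⟩
  rcases le_total t s with h | h
  · exact not_lt_of_ge (hpmax ⟨⟨hap.trans ht.1.le, h⟩, hXt⟩) ht.1
  · exact not_lt_of_ge (hqmin ⟨⟨h, ht.2.le.trans hqc⟩, hXt⟩) ht.2

theorem AntitoneOn.le_of_tendsto_nhdsGT {f : ℝ → ℝ} {a b l : ℝ} (hf : AntitoneOn f (Ioc a b))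
    (hab : a < b) (hl : Tendsto f (𝓝[>] a) (𝓝 l)) : f b ≤ l :=
  ge_of_tendsto hl <| mem_of_superset (Ioo_mem_nhdsGT hab) fun _ hs =>
    hf ⟨hs.1, hs.2.le⟩ ⟨hab, le_rfl⟩ hs.2.le

theorem HasDerivAt.nonpos_of_pos_of_eq_zero {Y : ℝ → ℝ} {Y' p q : ℝ} (hd : HasDerivAt Y Y' q)
    (hpq : p < q) (hpos : ∀ t ∈ Ioo p q, 0 < Y t) (hq : Y q = 0) : Y' ≤ 0 := by
  refine le_of_tendsto ((hasDerivAt_iff_tendsto_slope.mp hd).mono_left (nhdsLT_le_nhdsNE q)) ?_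
  filter_upwards [Ioo_mem_nhdsLT hpq] with t ht
  rw [slope_def_field, hq, sub_zero]
  exact (div_neg_of_pos_of_neg (hpos t ht) (sub_neg.mpr ht.2)).le

theorem lipschitzWith_damped_field {F : ℝ → ℝ} {K : NNReal} {δ t : ℝ} (hF : LipschitzWith K F)
    (hδ : 0 < δ) (hδt : δ ≤ t) :
    LipschitzWith ((1 + 3 / δ).toNNReal + K) fun z : ℝ × ℝ => (z.2, -(3 / t * z.2) - F z.1) := by
  refine LipschitzWith.of_dist_le_mul fun z z' => ?_
  have h₁ : |z.1 - z'.1| ≤ dist z z' := by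
    rw [← Real.dist_eq, Prod.dist_eq]; exact le_max_left _ _
  have h₂ : |z.2 - z'.2| ≤ dist z z' := by
    rw [← Real.dist_eq, Prod.dist_eq]; exact le_max_right _ _
  have hFz : |F z.1 - F z'.1| ≤ K * |z.1 - z'.1| := by
    simpa only [Real.dist_eq] using hF.dist_le_mul z.1 z'.1
  have h3 : 3 / t ≤ 3 / δ := div_le_div_of_nonneg_left (by norm_num) hδ hδt
  have h3t : 0 ≤ 3 / t := by have := hδ.trans_le hδt; positivity
  have hdist := dist_nonneg (x := z) (y := z')
  have hK := K.coe_nonneg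
  rw [NNReal.coe_add, Real.coe_toNNReal _ (by positivity), Prod.dist_eq, Real.dist_eq,
    Real.dist_eq]
  refine max_le (by nlinarith [div_nonneg zero_le_three hδ.le]) ?_
  calc |-(3 / t * z.2) - F z.1 - (-(3 / t * z'.2) - F z'.1)|
      = |3 / t * (z.2 - z'.2) + (F z.1 - F z'.1)| := by rw [← abs_neg]; congr 1; ring
    _ ≤ 3 / t * |z.2 - z'.2| + |F z.1 - F z'.1| :=
        (abs_add_le _ _).trans_eq (by rw [abs_mul, abs_of_nonneg h3t])
    _ ≤ (1 + 3 / δ + K) * dist z z' := by nlinarith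

theorem eq_equilibrium_of_rest {F X : ℝ → ℝ} {K : NNReal} {xstar δ b : ℝ}
    (hF : LipschitzWith K F) (hFstar : F xstar = 0) (hδ : 0 < δ) (hδb : δ ≤ b)
    (hX : ∀ t ∈ Icc δ b, HasDerivAt X (deriv X t) t)
    (hX' : ∀ t ∈ Icc δ b, HasDerivAt (deriv X) (-(3 / t * deriv X t) - F (X t)) t)
    (hXb : X b = xstar) (hX'b : deriv X b = 0) : X δ = xstar := by
  set v : ℝ → ℝ × ℝ → ℝ × ℝ := fun t z => (z.2, -(3 / t * z.2) - F z.1)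
  have hv : ∀ t ∈ Ioc δ b, LipschitzOnWith ((1 + 3 / δ).toNNReal + K) (v t) univ := fun t ht =>
    (lipschitzWith_damped_field hF hδ ht.1.le).lipschitzOnWith
  have hsol : ∀ t ∈ Ioc δ b, HasDerivWithinAt (fun t => (X t, deriv X t))
      (v t (X t, deriv X t)) (Iic t) t := fun t ht =>
    ((hX t (Ioc_subset_Icc_self ht)).prodMk (hX' t (Ioc_subset_Icc_self ht))).hasDerivWithinAt
  have hrest : ∀ t ∈ Ioc δ b, HasDerivWithinAt (fun _ => (xstar, (0 : ℝ)))
      (v t (xstar, 0)) (Iic t) t := fun t _ => by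
    refine (hasDerivWithinAt_const t (Iic t) (xstar, (0 : ℝ))).congr_deriv ?_
    ext <;> simp [v, hFstar]
  have hcont : ContinuousOn (fun t => (X t, deriv X t)) (Icc δ b) := fun t ht =>
    ((hX t ht).continuousAt.prodMk (hX' t ht).continuousAt).continuousWithinAt
  exact congrArg Prod.fst <| ODE_solution_unique_of_mem_Icc_left hv hcont hsol
    (fun _ _ => mem_univ _) continuousOn_const hrest (fun _ _ => mem_univ _)
    (Prod.ext hXb hX'b) (left_mem_Icc.mpr hδb)

def besselPhase (x : ℝ) : ℝ := x - arctan x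

theorem hasDerivAt_besselPhase (x : ℝ) :
    HasDerivAt besselPhase (x ^ 2 / (1 + x ^ 2)) x := by
  refine ((hasDerivAt_id' x).sub (hasDerivAt_arctan x)).congr_deriv ?_
  field_simp
  ring

theorem strictMonoOn_besselPhase : StrictMonoOn besselPhase (Ici 0) := by
  refine strictMonoOn_of_deriv_pos (convex_Ici 0)
    (fun x _ => (hasDerivAt_besselPhase x).continuousAt.continuousWithinAt) fun x hx => ?_
  rw [interior_Ici, mem_Ioi] at hx
  rw [(hasDerivAt_besselPhase x).deriv]
  positivity

theorem exists_besselPhase_eq_add_pi {x₀ : ℝ} (hx₀ : 0 ≤ x₀) :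
    ∃ x ∈ Ioo x₀ (x₀ + 3 * π / 2), besselPhase x = besselPhase x₀ + π := by
  have hcont : ContinuousOn besselPhase (Icc x₀ (x₀ + 3 * π / 2)) :=
    fun x _ => (hasDerivAt_besselPhase x).continuousAt.continuousWithinAt
  have harctan : 0 ≤ arctan x₀ := arctan_nonneg.mpr hx₀
  have hend : besselPhase x₀ + π < besselPhase (x₀ + 3 * π / 2) := by
    have := arctan_lt_pi_div_two (x₀ + 3 * π / 2)
    simp only [besselPhase]
    linarith
  exact intermediate_value_Ioo (by linarith [pi_pos]) hcont ⟨by linarith [pi_pos], hend⟩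

/-- `x ↦ x S(x)`, where `S` is the Riccati–Bessel solution of `S'' + (1 - 2 / x²) S = 0`
with phase chosen so that it vanishes at `x₀`. -/
def besselNum (x₀ x : ℝ) : ℝ := sin (x - besselPhase x₀) - x * cos (x - besselPhase x₀)

theorem hasDerivAt_besselNum (x₀ x : ℝ) :
    HasDerivAt (besselNum x₀) (x * sin (x - besselPhase x₀)) x := by
  have h := (hasDerivAt_id' x).sub_const (besselPhase x₀)
  exact (h.sin.sub ((hasDerivAt_id' x).mul h.cos)).congr_deriv (by ring)

theorem besselNum_eq_sqrt_mul_sin (x₀ x : ℝ) :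
    besselNum x₀ x = √(1 + x ^ 2) * sin (besselPhase x - besselPhase x₀) := by
  have harg : x - besselPhase x₀ = (besselPhase x - besselPhase x₀) + arctan x := by
    simp only [besselPhase]; ring
  have hs : √(1 + x ^ 2) ^ 2 = 1 + x ^ 2 := sq_sqrt (by positivity)
  have hpos : 0 < √(1 + x ^ 2) := sqrt_pos.mpr (by positivity)
  rw [besselNum, harg, sin_add, cos_add, sin_arctan, cos_arctan]
  field_simp
  linear_combination (-sin (besselPhase x - besselPhase x₀)) * hs

theorem besselNum_self (x₀ : ℝ) : besselNum x₀ x₀ = 0 := by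
  simp [besselNum_eq_sqrt_mul_sin]

theorem abs_besselNum_zero_le (x : ℝ) : |besselNum 0 x| ≤ 2 * |x| := by
  have hcos : |x * cos x| ≤ |x| := by
    rw [abs_mul]; exact mul_le_of_le_one_right (abs_nonneg x) (abs_cos_le_one x)
  simp only [besselNum, show besselPhase 0 = 0 by simp [besselPhase], sub_zero]
  linarith [abs_sub (sin x) (x * cos x), abs_sin_le_abs (x := x)]

theorem exists_next_zero_besselNum {x₀ : ℝ} (hx₀ : 0 ≤ x₀) :
    ∃ x₂ ∈ Ioo x₀ (x₀ + 3 * π / 2), besselNum x₀ x₂ = 0 ∧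
      (∀ x ∈ Ioo x₀ x₂, 0 < besselNum x₀ x) ∧ sin (x₂ - besselPhase x₀) < 0 := by
  obtain ⟨x₂, hx₂, hphase⟩ := exists_besselPhase_eq_add_pi hx₀
  refine ⟨x₂, hx₂, by rw [besselNum_eq_sqrt_mul_sin, hphase]; simp, fun x hx => ?_, ?_⟩
  · have hx0 : 0 ≤ x := hx₀.trans hx.1.le
    have hlo := strictMonoOn_besselPhase hx₀ hx0 hx.1
    have hhi := strictMonoOn_besselPhase hx0 (hx₀.trans hx₂.1.le) hx.2
    rw [besselNum_eq_sqrt_mul_sin]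
    have : 0 < √(1 + x ^ 2) := sqrt_pos.mpr (by positivity)
    have := sin_pos_of_pos_of_lt_pi (sub_pos.mpr hlo) (by linarith)
    positivity
  · have hx₂pos : 0 < x₂ := hx₀.trans_lt hx₂.1
    have harg : x₂ - besselPhase x₀ = arctan x₂ + π := by
      simp only [besselPhase] at hphase ⊢; linarith
    rw [harg, sin_add_pi, neg_lt_zero]
    exact sin_pos_of_pos_of_lt_pi (arctan_pos.mpr hx₂pos)
      ((arctan_lt_pi_div_two x₂).trans (by linarith [pi_pos]))

theorem continuous_besselNum (x₀ : ℝ) : Continuous (besselNum x₀) :=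
  continuous_iff_continuousAt.mpr fun x => (hasDerivAt_besselNum x₀ x).continuousAt

theorem hasDerivAt_besselNum_mul (k x₀ t : ℝ) :
    HasDerivAt (fun t => besselNum x₀ (k * t)) (k * (k * t * sin (k * t - besselPhase x₀))) t :=
  ((hasDerivAt_besselNum x₀ (k * t)).comp t ((hasDerivAt_id' t).const_mul k)).congr_deriv (by ring)

/- With `w = t^(-3/2) u`, `(t³ w')' + k² t³ w = t^(3/2) (u'' + k² u) - (3/4) t^(-1/2) u`.
The minorant takes `u(t) = besselNum (k t₀) (k t) / t`, for which `u'' + k² u = 2 u / t²`;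
the majorant takes `u(t) = sin (k (t - p))`. -/
section Comparison

variable {k t₀ p t : ℝ}

def minorantSol (k t₀ t : ℝ) : ℝ := besselNum (k * t₀) (k * t) / (t ^ 2 * √t)

def minorantMom (k t₀ t : ℝ) : ℝ :=
  k ^ 2 * t * √t * sin (k * t - besselPhase (k * t₀)) - 5 / 2 * besselNum (k * t₀) (k * t) / √t

theorem hasDerivAt_minorantSol (ht : 0 < t) :
    HasDerivAt (minorantSol k t₀) (minorantMom k t₀ t / t ^ 3) t := by
  have hs := hasDerivAt_sqrt ht.ne'
  have hsq : 0 < √t := sqrt_pos.mpr ht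
  refine ((hasDerivAt_besselNum_mul k (k * t₀) t).div ((hasDerivAt_pow 2 t).mul hs)
    (by simp only [Pi.mul_apply]; positivity)).congr_deriv ?_
  obtain ⟨s, hs0, rfl⟩ : ∃ s, 0 < s ∧ t = s ^ 2 := ⟨√t, hsq, (sq_sqrt ht.le).symm⟩
  simp only [minorantMom, Pi.mul_apply, sqrt_sq hs0.le]
  field_simp
  ring

theorem hasDerivAt_minorantMom (ht : 0 < t) :
    HasDerivAt (minorantMom k t₀)
      (-(t ^ 3 * (k ^ 2 - 5 / (4 * t ^ 2)) * minorantSol k t₀ t)) t := by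
  have hs := hasDerivAt_sqrt ht.ne'
  have hsq : 0 < √t := sqrt_pos.mpr ht
  have hsin := ((hasDerivAt_id' t).const_mul k |>.sub_const (besselPhase (k * t₀))).sin
  refine (((((hasDerivAt_id' t).const_mul (k ^ 2)).mul hs).mul hsin).sub
    (((hasDerivAt_besselNum_mul k (k * t₀) t).const_mul (5 / 2)).div hs hsq.ne')).congr_deriv ?_
  obtain ⟨s, hs0, rfl⟩ : ∃ s, 0 < s ∧ t = s ^ 2 := ⟨√t, hsq, (sq_sqrt ht.le).symm⟩
  simp only [minorantSol, besselNum, Pi.mul_apply, sqrt_sq hs0.le]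
  field_simp
  ring

theorem exists_minorantSol_eq_zero (hk : 0 < k) (ht₀ : 0 ≤ t₀) :
    ∃ t₂ ∈ Ioo t₀ (t₀ + 3 * π / (2 * k)), minorantSol k t₀ t₂ = 0 ∧
      minorantMom k t₀ t₂ < 0 ∧ ∀ t ∈ Ioc t₀ t₂, 0 ≤ minorantSol k t₀ t := by
  obtain ⟨x₂, hx₂, hN₂, hN, hsin⟩ := exists_next_zero_besselNum (mul_nonneg hk.le ht₀)
  have hkt₂ : k * (x₂ / k) = x₂ := mul_div_cancel₀ _ hk.ne'
  have ht₀₂ : t₀ < x₂ / k := (lt_div_iff₀' hk).mpr hx₂.1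
  have hw₂ : minorantSol k t₀ (x₂ / k) = 0 := by rw [minorantSol, hkt₂, hN₂, zero_div]
  refine ⟨x₂ / k, ⟨ht₀₂, ?_⟩, hw₂, ?_, ?_⟩
  · rw [div_lt_iff₀' hk, mul_add, mul_div_assoc', mul_comm 2 k, mul_div_mul_left _ _ hk.ne']
    exact hx₂.2
  · have : 0 < x₂ / k := ht₀.trans_lt ht₀₂
    rw [minorantMom, hkt₂, hN₂, mul_zero, zero_div, sub_zero]
    exact mul_neg_of_pos_of_neg (by positivity) hsin
  · rintro t ⟨h₀, h₂⟩
    have ht : 0 < t := ht₀.trans_lt h₀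
    rcases h₂.lt_or_eq with h₂ | rfl
    · have := hN (k * t) ⟨mul_lt_mul_of_pos_left h₀ hk, hkt₂ ▸ mul_lt_mul_of_pos_left h₂ hk⟩
      exact (div_pos this (by positivity)).le
    · exact hw₂.ge

def majorantSol (k p t : ℝ) : ℝ := sin (k * (t - p)) / (t * √t)

def majorantMom (k p t : ℝ) : ℝ :=
  k * t * √t * cos (k * (t - p)) - 3 / 2 * √t * sin (k * (t - p))

theorem hasDerivAt_majorantSol (ht : 0 < t) :
    HasDerivAt (majorantSol k p) (majorantMom k p t / t ^ 3) t := by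
  have hs := hasDerivAt_sqrt ht.ne'
  have hsq : 0 < √t := sqrt_pos.mpr ht
  have harg := ((hasDerivAt_id' t).sub_const p).const_mul k
  refine (harg.sin.div ((hasDerivAt_id' t).mul hs)
    (by simp only [Pi.mul_apply]; positivity)).congr_deriv ?_
  obtain ⟨s, hs0, rfl⟩ : ∃ s, 0 < s ∧ t = s ^ 2 := ⟨√t, hsq, (sq_sqrt ht.le).symm⟩
  simp only [majorantMom, Pi.mul_apply, sqrt_sq hs0.le]
  field_simp
  ring

theorem hasDerivAt_majorantMom (ht : 0 < t) :
    HasDerivAt (majorantMom k p)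
      (-(t ^ 3 * (k ^ 2 + 3 / (4 * t ^ 2)) * majorantSol k p t)) t := by
  have hs := hasDerivAt_sqrt ht.ne'
  have hsq : 0 < √t := sqrt_pos.mpr ht
  have harg := ((hasDerivAt_id' t).sub_const p).const_mul k
  refine (((((hasDerivAt_id' t).const_mul k).mul hs).mul harg.cos).sub
    ((hs.const_mul (3 / 2)).mul harg.sin)).congr_deriv ?_
  obtain ⟨s, hs0, rfl⟩ : ∃ s, 0 < s ∧ t = s ^ 2 := ⟨√t, hsq, (sq_sqrt ht.le).symm⟩
  simp only [majorantSol, Pi.mul_apply, sqrt_sq hs0.le]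
  field_simp
  ring

theorem majorantSol_nonneg (hk : 0 < k) (hp : 0 < p) (ht : p ≤ t) (hkt : k * (t - p) ≤ π) :
    0 ≤ majorantSol k p t :=
  div_nonneg (sin_nonneg_of_nonneg_of_le_pi (mul_nonneg hk.le (sub_nonneg.mpr ht)) hkt)
    (by have := hp.trans_le ht; positivity)

theorem majorantSol_pos (hk : 0 < k) (hp : 0 < p) (ht : p < t) (hkt : k * (t - p) < π) :
    0 < majorantSol k p t :=
  div_pos (sin_pos_of_pos_of_lt_pi (mul_pos hk (sub_pos.mpr ht)) hkt)
    (by have := hp.trans ht; positivity)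

end Comparison

/-- `t³ (Y' w - Y w')`, with `Q = t³ w'` passed in place of `w'`. -/
def weightedWronskian (Y Y' w Q : ℝ → ℝ) (t : ℝ) : ℝ := t ^ 3 * Y' t * w t - Y t * Q t

theorem hasDerivAt_weightedWronskian {Y Y' g w Q : ℝ → ℝ} {t q : ℝ} (ht : 0 < t)
    (hY : HasDerivAt Y (Y' t) t) (hP : HasDerivAt (fun u => u ^ 3 * Y' u) (-(t ^ 3 * g t)) t)
    (hw : HasDerivAt w (Q t / t ^ 3) t) (hQ : HasDerivAt Q (-(t ^ 3 * q * w t)) t) :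
    HasDerivAt (weightedWronskian Y Y' w Q) (t ^ 3 * w t * (q * Y t - g t)) t :=
  ((hP.mul hw).sub (hY.mul hQ)).congr_deriv (by field_simp; ring)

section Sturm

variable {Y Y' g : ℝ → ℝ}

theorem exists_nonpos_of_minorant {μ t₀ : ℝ} (hμ : 0 < μ) (ht₀ : 0 ≤ t₀)
    (hY : ∀ t > 0, HasDerivAt Y (Y' t) t)
    (hP : ∀ t > 0, HasDerivAt (fun u => u ^ 3 * Y' u) (-(t ^ 3 * g t)) t)
    (hg : ∀ t > 0, μ * Y t ^ 2 ≤ g t * Y t)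
    (hV : Tendsto (weightedWronskian Y Y' (minorantSol √μ t₀) (minorantMom √μ t₀))
      (𝓝[>] t₀) (𝓝 0)) :
    ∃ t ∈ Ioo t₀ (t₀ + 3 * π / (2 * √μ)), Y t ≤ 0 := by
  by_contra! hpos
  set k := √μ
  obtain ⟨t₂, ⟨ht₀₂, ht₂⟩, hw₂, hQ₂, hw⟩ := exists_minorantSol_eq_zero (sqrt_pos.mpr hμ) ht₀
  have hYpos : ∀ t ∈ Ioc t₀ t₂, 0 < Y t := fun t ht => hpos t ⟨ht.1, ht.2.trans_lt ht₂⟩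
  set w := minorantSol k t₀
  set Q := minorantMom k t₀
  have hV' : ∀ t ∈ Ioc t₀ t₂, HasDerivAt (weightedWronskian Y Y' w Q)
      (t ^ 3 * w t * ((k ^ 2 - 5 / (4 * t ^ 2)) * Y t - g t)) t := fun t ht' =>
    have ht : 0 < t := ht₀.trans_lt ht'.1
    hasDerivAt_weightedWronskian ht (hY t ht) (hP t ht) (hasDerivAt_minorantSol ht)
      (hasDerivAt_minorantMom ht)
  have hanti : AntitoneOn (weightedWronskian Y Y' w Q) (Ioc t₀ t₂) := by
    refine antitoneOn_of_hasDerivWithinAt_nonpos (convex_Ioc t₀ t₂)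
      (f' := fun t => t ^ 3 * w t * ((k ^ 2 - 5 / (4 * t ^ 2)) * Y t - g t))
      (fun t ht => (hV' t ht).continuousAt.continuousWithinAt) (fun t ht => ?_) fun t ht => ?_
    all_goals rw [interior_Ioc] at ht
    · exact (hV' t (Ioo_subset_Ioc_self ht)).hasDerivWithinAt
    · have ht' := Ioo_subset_Ioc_self ht
      have htpos : 0 < t := ht₀.trans_lt ht.1
      have hYt := hYpos t ht'
      have hgt : μ * Y t ≤ g t := by nlinarith [hg t htpos]
      have hk2 : k ^ 2 = μ := sq_sqrt hμ.le
      have : 0 ≤ t ^ 3 * w t := mul_nonneg (by positivity) (hw t ht')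
      refine mul_nonpos_of_nonneg_of_nonpos this ?_
      rw [hk2, sub_mul]
      have : 0 ≤ 5 / (4 * t ^ 2) * Y t := by positivity
      linarith
  have hV₂ : 0 < weightedWronskian Y Y' w Q t₂ := by
    rw [weightedWronskian, hw₂, mul_zero, zero_sub, neg_pos]
    exact mul_neg_of_pos_of_neg (hYpos t₂ ⟨ht₀₂, le_rfl⟩) hQ₂
  linarith [hanti.le_of_tendsto_nhdsGT ht₀₂ hV]

theorem tendsto_weightedWronskian_minorant_of_eq_zero {k t₀ : ℝ} (ht₀ : 0 < t₀)
    (hY : ContinuousAt Y t₀) (hP : ContinuousAt (fun u => u ^ 3 * Y' u) t₀) (hY₀ : Y t₀ = 0) :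
    Tendsto (weightedWronskian Y Y' (minorantSol k t₀) (minorantMom k t₀)) (𝓝[>] t₀) (𝓝 0) := by
  have hV : ContinuousAt (weightedWronskian Y Y' (minorantSol k t₀) (minorantMom k t₀)) t₀ :=
    (hP.mul (hasDerivAt_minorantSol ht₀).continuousAt).sub
      (hY.mul (hasDerivAt_minorantMom ht₀).continuousAt)
  have hV₀ : weightedWronskian Y Y' (minorantSol k t₀) (minorantMom k t₀) t₀ = 0 := by
    simp [weightedWronskian, minorantSol, besselNum_self, hY₀]
  exact hV₀ ▸ hV.tendsto.mono_left nhdsWithin_le_nhds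

theorem tendsto_weightedWronskian_minorant_zero {k y₀ : ℝ}
    (hY : Tendsto Y (𝓝[>] 0) (𝓝 y₀)) (hY' : Tendsto Y' (𝓝[>] 0) (𝓝 0)) :
    Tendsto (weightedWronskian Y Y' (minorantSol k 0) (minorantMom k 0)) (𝓝[>] 0) (𝓝 0) := by
  have hcont : ∀ {F : ℝ → ℝ}, Continuous F → F 0 = 0 → Tendsto F (𝓝[>] 0) (𝓝 0) :=
    fun hF h0 => (hF.tendsto' 0 0 h0).mono_left nhdsWithin_le_nhds
  have hw : Tendsto (fun t => t ^ 3 * minorantSol k 0 t) (𝓝[>] 0) (𝓝 0) := by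
    refine (hcont (F := fun t => besselNum (k * 0) (k * t) * √t)
      (((continuous_besselNum _).comp (continuous_const_mul k)).mul continuous_sqrt)
      (by simp)).congr' ?_
    filter_upwards [self_mem_nhdsWithin] with t (ht : 0 < t)
    have := sqrt_pos.mpr ht
    rw [minorantSol]
    field_simp
    rw [sq_sqrt ht.le, mul_comm]
  have hN : Tendsto (fun t => besselNum (k * 0) (k * t) / √t) (𝓝[>] 0) (𝓝 0) := by
    refine squeeze_zero_norm' ?_ (hcont (continuous_const.mul continuous_sqrt) (by simp)
      (F := fun t => 2 * |k| * √t))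
    filter_upwards [self_mem_nhdsWithin] with t (ht : 0 < t)
    have hs := sqrt_pos.mpr ht
    rw [norm_div, norm_of_nonneg hs.le, div_le_iff₀ hs, mul_assoc, mul_self_sqrt ht.le,
      Real.norm_eq_abs, mul_zero]
    simpa [abs_mul, abs_of_pos ht, mul_assoc] using abs_besselNum_zero_le (k * t)
  have hQ : Tendsto (minorantMom k 0) (𝓝[>] 0) (𝓝 0) := by
    have h1 := hcont (F := fun t => k ^ 2 * t * √t * sin (k * t - besselPhase (k * 0)))
      (by fun_prop) (by simp)
    have hQ := h1.sub (hN.const_mul (5 / 2))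
    rw [mul_zero (5 / 2 : ℝ), sub_zero (0 : ℝ)] at hQ
    exact hQ.congr fun t => by rw [minorantMom, mul_div_assoc]
  have hV := (hY'.mul hw).sub (hY.mul hQ)
  rw [zero_mul, mul_zero, sub_zero (0 : ℝ)] at hV
  exact hV.congr fun t => by rw [weightedWronskian]; ring

theorem pi_div_sqrt_lt_of_majorant {L p q : ℝ} (hL : 0 < L) (hp : 0 < p) (hpq : p < q)
    (hY : ∀ t > 0, HasDerivAt Y (Y' t) t)
    (hP : ∀ t > 0, HasDerivAt (fun u => u ^ 3 * Y' u) (-(t ^ 3 * g t)) t)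
    (hg : ∀ t > 0, g t * Y t ≤ L * Y t ^ 2)
    (hpos : ∀ t ∈ Ioo p q, 0 < Y t) (hYp : Y p = 0) (hYq : Y q = 0) :
    π / √L < q - p := by
  by_contra! hqp
  set k := √L
  have hk : 0 < k := sqrt_pos.mpr hL
  have hkqp : (q - p) * k ≤ π := (le_div_iff₀ hk).mp hqp
  set w := majorantSol k p
  set Q := majorantMom k p
  have hV' : ∀ t ∈ Icc p q, HasDerivAt (weightedWronskian Y Y' w Q)
      (t ^ 3 * w t * ((k ^ 2 + 3 / (4 * t ^ 2)) * Y t - g t)) t := fun t ht' =>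
    have ht : 0 < t := hp.trans_le ht'.1
    hasDerivAt_weightedWronskian ht (hY t ht) (hP t ht) (hasDerivAt_majorantSol ht)
      (hasDerivAt_majorantMom ht)
  have hmono : StrictMonoOn (weightedWronskian Y Y' w Q) (Icc p q) := by
    refine strictMonoOn_of_hasDerivWithinAt_pos (convex_Icc p q)
      (f' := fun t => t ^ 3 * w t * ((k ^ 2 + 3 / (4 * t ^ 2)) * Y t - g t))
      (fun t ht => (hV' t ht).continuousAt.continuousWithinAt) (fun t ht => ?_) fun t ht => ?_
    all_goals rw [interior_Icc] at ht
    · exact (hV' t (Ioo_subset_Icc_self ht)).hasDerivWithinAt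
    · have htpos : 0 < t := hp.trans ht.1
      have hYt := hpos t ht
      have hgt : g t ≤ L * Y t := by nlinarith [hg t htpos]
      have hwt : 0 < w t := majorantSol_pos hk hp ht.1 (by nlinarith [ht.2])
      refine mul_pos (by positivity) ?_
      rw [sq_sqrt hL.le, add_mul]
      have : 0 < 3 / (4 * t ^ 2) * Y t := by positivity
      linarith
  have hVp : weightedWronskian Y Y' w Q p = 0 := by
    simp [weightedWronskian, w, majorantSol, hYp]
  have hVq : weightedWronskian Y Y' w Q q ≤ 0 := by
    have hqpos : 0 < q := hp.trans hpq
    have hwq : 0 ≤ w q := majorantSol_nonneg hk hp hpq.le (by linarith)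
    have hY'q : Y' q ≤ 0 := (hY q hqpos).nonpos_of_pos_of_eq_zero hpq hpos hYq
    rw [weightedWronskian, hYq, zero_mul, sub_zero]
    exact mul_nonpos_of_nonpos_of_nonneg (mul_nonpos_of_nonneg_of_nonpos (by positivity) hY'q) hwq
  linarith [hmono (left_mem_Icc.2 hpq.le) (right_mem_Icc.2 hpq.le) hpq]

end Sturm

namespace NesterovSol1

variable {f X : ℝ → ℝ} {x0 xstar t : ℝ}

theorem hasDerivAt (hX : NesterovSol1 f x0 X) (ht : 0 < t) : HasDerivAt X (deriv X t) t :=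
  ((hX.2.2.1.differentiableOn (by norm_num)).differentiableAt (Ioi_mem_nhds ht)).hasDerivAt

theorem hasDerivAt_deriv (hX : NesterovSol1 f x0 X) (ht : 0 < t) :
    HasDerivAt (deriv X) (-(3 / t * deriv X t) - deriv f (X t)) t :=
  (((hX.2.2.1.deriv_of_isOpen isOpen_Ioi (by norm_num)).differentiableOn one_ne_zero
    |>.differentiableAt (Ioi_mem_nhds ht)).hasDerivAt).congr_deriv
    (by linarith [hX.2.2.2.2 t ht])

theorem hasDerivAt_const_mul_momentum (hX : NesterovSol1 f x0 X) (ε : ℝ) (ht : 0 < t) :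
    HasDerivAt (fun u => u ^ 3 * (ε * deriv X u)) (-(t ^ 3 * (ε * deriv f (X t)))) t :=
  ((hasDerivAt_pow 3 t).mul ((hX.hasDerivAt_deriv ht).const_mul ε)).congr_deriv
    (by field_simp; ring)

theorem tendsto_nhdsGT_zero (hX : NesterovSol1 f x0 X) : Tendsto X (𝓝[>] 0) (𝓝 x0) :=
  hX.1 ▸ (hX.2.1.continuousOn 0 self_mem_Ici).mono_left (nhdsWithin_mono _ Ioi_subset_Ici_self)

theorem tendsto_deriv_nhdsGT_zero (hX : NesterovSol1 f x0 X) :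
    Tendsto (deriv X) (𝓝[>] 0) (𝓝 0) := by
  have h := (hX.2.1.continuousOn_derivWithin (uniqueDiffOn_Ici 0) le_rfl 0 self_mem_Ici).tendsto
  rw [hX.2.2.2.1] at h
  refine (h.mono_left (nhdsWithin_mono _ Ioi_subset_Ici_self)).congr' ?_
  filter_upwards [self_mem_nhdsWithin] with t ht
  exact derivWithin_of_mem_nhds (mem_of_superset (Ioi_mem_nhds ht) Ioi_subset_Ici_self)

theorem exists_sq_eq_one_forall_mul_sub_pos (hX : NesterovSol1 f x0 X) {u v : ℝ} (hu : 0 ≤ u)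
    (hne : ∀ t ∈ Ioo u v, X t ≠ xstar) :
    ∃ ε : ℝ, ε ^ 2 = 1 ∧ ∀ t ∈ Ioo u v, 0 < ε * (X t - xstar) :=
  isPreconnected_Ioo.exists_sq_eq_one_forall_mul_pos
    ((hX.2.1.continuousOn.mono fun _ ht => mem_Ici.mpr (hu.trans ht.1.le)).sub continuousOn_const)
    fun t ht => sub_ne_zero.mpr (hne t ht)

theorem exists_eq_mem_Ioo {μ t₀ : ℝ} (hX : NesterovSol1 f x0 X) (hμ : 0 < μ)
    (hf : ∀ z, μ * (z - xstar) ^ 2 ≤ deriv f z * (z - xstar)) (ht₀ : 0 ≤ t₀)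
    (hroot : 0 < t₀ → X t₀ = xstar) :
    ∃ t ∈ Ioo t₀ (t₀ + 3 * π / (2 * √μ)), X t = xstar := by
  by_contra! hne
  obtain ⟨ε, hε, hpos⟩ := hX.exists_sq_eq_one_forall_mul_sub_pos ht₀ hne
  have hY : ∀ t > 0, HasDerivAt (fun u => ε * (X u - xstar)) (ε * deriv X t) t :=
    fun t ht => ((hX.hasDerivAt ht).sub_const xstar).const_mul ε
  obtain ⟨t, ht, hYt⟩ := exists_nonpos_of_minorant hμ ht₀ hY
    (fun t ht => hX.hasDerivAt_const_mul_momentum ε ht)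
    (fun t _ => by
      linear_combination hf (X t) + (μ * (X t - xstar) ^ 2 - deriv f (X t) * (X t - xstar)) * hε)
    (by
      rcases ht₀.eq_or_lt with rfl | h
      · exact tendsto_weightedWronskian_minorant_zero
          ((hX.tendsto_nhdsGT_zero.sub_const xstar).const_mul ε)
          (by simpa using hX.tendsto_deriv_nhdsGT_zero.const_mul ε)
      · exact tendsto_weightedWronskian_minorant_of_eq_zero h (hY t₀ h).continuousAt
          (hX.hasDerivAt_const_mul_momentum ε h).continuousAt (by simp [hroot h]))
  exact (hpos t ht).not_ge hYt

theorem pi_div_sqrt_lt_sub {L p q : ℝ} (hX : NesterovSol1 f x0 X) (hL : 0 < L)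
    (hf : ∀ z, deriv f z * (z - xstar) ≤ L * (z - xstar) ^ 2) (hp : 0 < p) (hpq : p < q)
    (hXp : X p = xstar) (hXq : X q = xstar) (hne : ∀ t ∈ Ioo p q, X t ≠ xstar) :
    π / √L < q - p := by
  obtain ⟨ε, hε, hpos⟩ := hX.exists_sq_eq_one_forall_mul_sub_pos hp.le hne
  exact pi_div_sqrt_lt_of_majorant hL hp hpq
    (fun t ht => ((hX.hasDerivAt ht).sub_const xstar).const_mul ε)
    (fun t ht => hX.hasDerivAt_const_mul_momentum ε ht)
    (fun t _ => by
      linear_combination hf (X t) + (deriv f (X t) * (X t - xstar) - L * (X t - xstar) ^ 2) * hε)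
    hpos (by simp [hXp]) (by simp [hXq])

theorem exists_ne_mem_Ioo {K : NNReal} {a c : ℝ} (hX : NesterovSol1 f x0 X)
    (hf : LipschitzWith K (deriv f)) (hstar : deriv f xstar = 0) (hx0 : x0 ≠ xstar)
    (ha : 0 < a) (hac : a < c) : ∃ s ∈ Ioo a c, X s ≠ xstar := by
  by_contra! hrest
  obtain ⟨b, hb⟩ := nonempty_Ioo.mpr hac
  have hX'b : deriv X b = 0 := by
    rw [Filter.EventuallyEq.deriv_eq (eventually_of_mem (Ioo_mem_nhds hb.1 hb.2) hrest),
      deriv_const]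
  have hδ : ∀ᶠ u in 𝓝[>] 0, X u ≠ xstar ∧ u ∈ Ioo 0 b :=
    (hX.tendsto_nhdsGT_zero.eventually (isOpen_ne.mem_nhds hx0)).and
      (Ioo_mem_nhdsGT (ha.trans hb.1))
  obtain ⟨δ, hXδ, hδ, hδb⟩ := hδ.exists
  exact hXδ <| eq_equilibrium_of_rest hf hstar hδ hδb.le
    (fun t ht => hX.hasDerivAt (hδ.trans_le ht.1))
    (fun t ht => hX.hasDerivAt_deriv (hδ.trans_le ht.1)) (hrest b hb) hX'b

end NesterovSol1

/-- **Theorem 4 (oscillation of strongly convex `f`).**  The roots of `X(t) - x⋆` appear with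
gaps at most `7.6635/√μ` and any three consecutive roots span more than `π/√L`. -/
theorem nesterov_ode_oscillation (μ L : ℝ) (hμ : 0 < μ) (hμL : μ ≤ L)
    (f : ℝ → ℝ) (hf : MemS1 μ L f) (xstar : ℝ) (hmin : IsMinOn f Set.univ xstar)
    (x0 : ℝ) (hx0 : x0 ≠ xstar) (X : ℝ → ℝ) (hX : NesterovSol1 f x0 X) :
    (∃ t ∈ Set.Ioo (0:ℝ) (7.6635 / Real.sqrt μ), X t = xstar) ∧
    (∀ t > (0:ℝ), X t = xstar →
      ∃ t' ∈ Set.Ioo t (t + 7.6635 / Real.sqrt μ), X t' = xstar) ∧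
    (∀ a b c : ℝ, 0 < a → a < b → b < c →
      X a = xstar → X b = xstar → X c = xstar → Real.pi / Real.sqrt L < c - a) := by
  obtain ⟨-, hC1, hlip, hconv⟩ := hf
  have hL : 0 < L := hμ.trans_le hμL
  have hstar : deriv f xstar = 0 := (hmin.isLocalMin univ_mem).deriv_eq_zero
  have hlow (z : ℝ) : μ * (z - xstar) ^ 2 ≤ deriv f z * (z - xstar) := by
    simpa [hstar] using mul_sq_le_deriv_sub_mul (hC1.differentiable one_ne_zero) hconv xstar z
  have hup (z : ℝ) : deriv f z * (z - xstar) ≤ L * (z - xstar) ^ 2 := by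
    simpa [hstar] using sub_mul_sub_le_mul_sq_of_abs_sub_le (hlip z xstar)
  have hgap : 3 * π / (2 * √μ) < 7.6635 / √μ := by
    rw [← div_div]
    exact div_lt_div_of_pos_right (by linarith [pi_lt_d2]) (sqrt_pos.mpr hμ)
  have hroots {t₀ : ℝ} (ht₀ : 0 ≤ t₀) (hroot : 0 < t₀ → X t₀ = xstar) :
      ∃ t ∈ Ioo t₀ (t₀ + 7.6635 / √μ), X t = xstar := by
    obtain ⟨t, ht, hXt⟩ := hX.exists_eq_mem_Ioo hμ hlow ht₀ hroot
    exact ⟨t, ⟨ht.1, by linarith [ht.2]⟩, hXt⟩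
  refine ⟨by simpa using hroots le_rfl (absurd · (lt_irrefl 0)),
    fun t ht hXt => hroots ht.le fun _ => hXt, fun a b c ha hab hbc hXa _ hXc => ?_⟩
  have hlipf : LipschitzWith L.toNNReal (deriv f) := LipschitzWith.of_dist_le_mul fun x y => by
    simpa only [Real.dist_eq, Real.coe_toNNReal _ hL.le] using hlip x y
  obtain ⟨s, hs, hXs⟩ := hX.exists_ne_mem_Ioo hlipf hstar hx0 ha (hab.trans hbc)
  obtain ⟨p, q, hap, hpq, hqc, hXp, hXq, hne⟩ := exists_consecutive_eq
    (hX.2.1.continuousOn.mono fun t ht => mem_Ici.mpr (ha.le.trans ht.1)) hXa hXc hs hXs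
  linarith [hX.pi_div_sqrt_lt_sub hL hup (ha.trans_le hap) hpq hXp hXq hne]
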